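/- Invariance under isochoric change of reference configuration: let F₀ be a 3×3 real matrix with det F₀ = 1. For symmetric positive definite C and C_i^n and κ ≥ 0, define N(C, C_i) := unimodular part of (C_i + κ·C̄), where C̄ is the unimodular part of C. Then N(F₀^{-T} C F₀^{-1}, F₀^{-T} C_i^n F₀^{-1}) = F₀^{-T}·N(C, C_i^n)·F₀^{-1}. -/

import Mathlib

open Matrix

/-- Unimodular part of a 3×3 matrix. -/
noncomputable def uni (A : Matrix (Fin 3) (Fin 3) ℝ) : Matrix (Fin 3) (Fin 3) ℝ :=
  A.det ^ (-(1 : ℝ) / 3) • A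

/-- The explicit update map of the time-stepping scheme. -/
noncomputable def updMap (κ : ℝ) (C Ci : Matrix (Fin 3) (Fin 3) ℝ) :
    Matrix (Fin 3) (Fin 3) ℝ :=
  uni (Ci + κ • uni C)

section Congruence

variable {P Q : Matrix (Fin 3) (Fin 3) ℝ}

theorem uni_mul_mul (hPQ : P.det * Q.det = 1) (A : Matrix (Fin 3) (Fin 3) ℝ) :
    uni (P * A * Q) = P * uni A * Q := by
  have hdet : (P * A * Q).det = A.det := by
    rw [det_mul, det_mul, mul_right_comm, hPQ, one_mul]
  rw [uni, uni, hdet, Matrix.mul_smul, Matrix.smul_mul]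

theorem updMap_mul_mul (hPQ : P.det * Q.det = 1) (κ : ℝ) (C Ci : Matrix (Fin 3) (Fin 3) ℝ) :
    updMap κ (P * C * Q) (P * Ci * Q) = P * updMap κ C Ci * Q := by
  have hsum : P * Ci * Q + κ • (P * uni C * Q) = P * (Ci + κ • uni C) * Q := by
    rw [Matrix.mul_add, Matrix.add_mul, Matrix.mul_smul, Matrix.smul_mul]
  rw [updMap, updMap, uni_mul_mul hPQ, hsum, uni_mul_mul hPQ]

end Congruence

theorem update_invariant_reference_change_general (F₀ : Matrix (Fin 3) (Fin 3) ℝ)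
    (hF₀ : F₀.det = 1) (C Cin : Matrix (Fin 3) (Fin 3) ℝ)
    (κ : ℝ) :
    updMap κ (F₀⁻¹ᵀ * C * F₀⁻¹) (F₀⁻¹ᵀ * Cin * F₀⁻¹) =
      F₀⁻¹ᵀ * updMap κ C Cin * F₀⁻¹ := by
  have hinv : F₀⁻¹.det = 1 := by
    rw [det_nonsing_inv, hF₀, Ring.inverse_one]
  exact updMap_mul_mul (by rw [det_transpose, hinv, one_mul]) κ C Cin

/-- Invariance of the numerical scheme under the isochoric change of the
reference configuration. -/
theorem update_invariant_reference_change (F₀ : Matrix (Fin 3) (Fin 3) ℝ)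
    (hF₀ : F₀.det = 1) (C Cin : Matrix (Fin 3) (Fin 3) ℝ)
    (hC : C.PosDef) (hCin : Cin.PosDef) (κ : ℝ) (hκ : 0 ≤ κ) :
    updMap κ (F₀⁻¹ᵀ * C * F₀⁻¹) (F₀⁻¹ᵀ * Cin * F₀⁻¹) =
      F₀⁻¹ᵀ * updMap κ C Cin * F₀⁻¹ :=
  update_invariant_reference_change_general F₀ hF₀ C Cin κ
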